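/- Lower bound for the C_p functional, p ≥ 2 (Lemma 2.6): Let p ≥ 2. Then for all ξ, η ∈ ℂⁿ, C_p(ξ,η) ≥ c₁(p)|η|^p, where c₁(p) := inf_{(s,t)∈ℝ²\{(0,0)}} [ (t²+s²+2s+1)^{p/2} − 1 − ps ] / (t²+s²)^{p/2}; moreover c₁(p) ∈ (0,1]. -/

import Mathlib

/-- The functional `C_p(ξ,η) = |ξ|^p - |ξ-η|^p - p|ξ-η|^{p-2} Re⟨ξ-η, η⟩` on `ℂⁿ`. -/
noncomputable def Cp (n : ℕ) (p : ℝ) (ξ η : EuclideanSpace ℂ (Fin n)) : ℝ :=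
  ‖ξ‖ ^ p - ‖ξ - η‖ ^ p - p * ‖ξ - η‖ ^ (p - 2) * (inner ℂ (ξ - η) η : ℂ).re

/-- The sharp constant `c₁(p)`: the infimum over `(s,t) ≠ (0,0)` of
`[(t²+s²+2s+1)^{p/2} - 1 - ps] / (t²+s²)^{p/2}`. -/
noncomputable def c1 (p : ℝ) : ℝ :=
  sInf { r : ℝ | ∃ s t : ℝ, ¬(s = 0 ∧ t = 0) ∧
    r = ((t ^ 2 + s ^ 2 + 2 * s + 1) ^ (p / 2) - 1 - p * s) / (t ^ 2 + s ^ 2) ^ (p / 2) }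

/-! With `a = ξ - η`, homogeneity gives `C_p(ξ, η) = ‖a‖ ^ p F(s, ρ)` and `‖η‖ ^ p = ‖a‖ ^ p ρ ^ p`,
where `F = cpProfile p`, `s = Re⟨a, η⟩ / ‖a‖²`, `ρ = ‖η‖ / ‖a‖`, and `|s| ≤ ρ` by Cauchy–Schwarz;
the quotients in `c1` are the `F(s, ρ) / ρ ^ p` with `ρ² = t² + s²`. Bernoulli's inequality gives
`F(s, ρ) ≥ (p/2) ρ²`, which dominates `ρ ^ p / K ^ p` for `ρ ≤ K`; for `ρ ≥ K = (p + 1) 2 ^ (p + 1)`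
the leading term `(ρ² + 2s + 1) ^ (p/2) ≥ (ρ / 2) ^ p` absorbs `1 + p s`. Hence `c1 p ≥ K ^ (-p) > 0`. -/

open Real

lemma Real.sq_rpow_half {x : ℝ} (hx : 0 ≤ x) (p : ℝ) : (x ^ 2) ^ (p / 2) = x ^ p := by
  rw [← rpow_natCast_mul hx, Nat.cast_ofNat, mul_div_cancel₀ p two_ne_zero]

lemma two_mul_le_two_rpow {p : ℝ} (hp : 2 ≤ p) : 2 * p ≤ (2 : ℝ) ^ p := by
  have h := one_add_mul_self_le_rpow_one_add (s := 1) (by norm_num) (p := p - 1) (by linarith)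
  rw [show (1 : ℝ) + 1 = 2 by norm_num, rpow_sub_one two_ne_zero] at h
  linarith

/-- `C_p(ξ, η)` when `‖ξ - η‖ = 1`, `Re⟨ξ - η, η⟩ = s` and `‖η‖ = ρ`. -/
noncomputable def cpProfile (p s ρ : ℝ) : ℝ := (ρ ^ 2 + 2 * s + 1) ^ (p / 2) - 1 - p * s

section cpProfile

variable {p s ρ : ℝ}

lemma sq_add_le_of_abs_le (hs : |s| ≤ ρ) : (s + 1) ^ 2 ≤ ρ ^ 2 + 2 * s + 1 := by
  nlinarith [sq_le_sq' (neg_le_of_abs_le hs) (le_of_abs_le hs)]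

lemma mul_sq_le_cpProfile (hp : 2 ≤ p) (hs : |s| ≤ ρ) : p / 2 * ρ ^ 2 ≤ cpProfile p s ρ := by
  have h := one_add_mul_self_le_rpow_one_add (s := ρ ^ 2 + 2 * s)
    (by nlinarith [sq_add_le_of_abs_le hs, sq_nonneg (s + 1)]) (p := p / 2) (by linarith)
  rw [add_comm 1 (ρ ^ 2 + 2 * s)] at h
  rw [cpProfile]
  linarith

lemma rpow_div_le_cpProfile_of_le (hp : 2 ≤ p) (hs : |s| ≤ ρ) {R : ℝ} (hR : 1 ≤ R)
    (hρR : ρ ≤ R) : ρ ^ p / R ^ p ≤ cpProfile p s ρ := by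
  have hρ : 0 ≤ ρ := (abs_nonneg s).trans hs
  have hR0 : 0 < R := by linarith
  calc ρ ^ p / R ^ p = (ρ / R) ^ p := (div_rpow hρ hR0.le p).symm
    _ ≤ (ρ / R) ^ (2 : ℝ) := rpow_le_rpow_of_exponent_ge' (by positivity)
        ((div_le_one hR0).2 hρR) zero_le_two hp
    _ = ρ ^ 2 / R ^ 2 := by rw [rpow_two, div_pow]
    _ ≤ ρ ^ 2 := div_le_self (sq_nonneg ρ) (one_le_pow₀ hR)
    _ ≤ p / 2 * ρ ^ 2 := le_mul_of_one_le_left (sq_nonneg ρ) (by linarith)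
    _ ≤ cpProfile p s ρ := mul_sq_le_cpProfile hp hs

lemma rpow_div_le_cpProfile_of_ge (hp : 2 ≤ p) (hs : |s| ≤ ρ)
    (hρ : (p + 1) * 2 ^ (p + 1) ≤ ρ) : ρ ^ p / 2 ^ (p + 1) ≤ cpProfile p s ρ := by
  have h8 : (8 : ℝ) ≤ 2 ^ (p + 1) := by
    calc (8 : ℝ) = 2 ^ (3 : ℝ) := by norm_num
      _ ≤ 2 ^ (p + 1) := rpow_le_rpow_of_exponent_le one_le_two (by linarith)
  have hρ2 : 2 ≤ ρ := by nlinarith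
  -- `ρ ^ 2 + 2 s + 1 ≥ (ρ - 1) ^ 2 ≥ (ρ / 2) ^ 2`
  have hmain : ρ ^ p / 2 ^ p ≤ (ρ ^ 2 + 2 * s + 1) ^ (p / 2) := by
    rw [← div_rpow (by linarith) zero_le_two, ← sq_rpow_half (by linarith : (0 : ℝ) ≤ ρ / 2)]
    exact rpow_le_rpow (by positivity) (by nlinarith [neg_le_of_abs_le hs]) (by linarith)
  have hlin : (1 + p * s) * 2 ^ (p + 1) ≤ ρ ^ p :=
    calc (1 + p * s) * 2 ^ (p + 1) ≤ (p + 1) * ρ * 2 ^ (p + 1) := by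
          gcongr; nlinarith [le_of_abs_le hs]
      _ ≤ ρ * ρ := by nlinarith
      _ = ρ ^ (2 : ℝ) := by rw [rpow_two, sq]
      _ ≤ ρ ^ p := rpow_le_rpow_of_exponent_le (by linarith) hp
  rw [rpow_add_one two_ne_zero, ← le_div_iff₀ (by positivity)] at hlin
  have hhalf : ρ ^ p / (2 ^ p * 2) = ρ ^ p / 2 ^ p / 2 := by ring
  rw [rpow_add_one two_ne_zero, cpProfile]
  linarith

lemma rpow_div_le_cpProfile (hp : 2 ≤ p) (hs : |s| ≤ ρ) :
    ρ ^ p / ((p + 1) * 2 ^ (p + 1)) ^ p ≤ cpProfile p s ρ := by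
  set K : ℝ := (p + 1) * 2 ^ (p + 1)
  have h2K : 2 ^ (p + 1) ≤ K := le_mul_of_one_le_left (by positivity) (by linarith)
  have hK1 : 1 ≤ K := le_trans (one_le_rpow one_le_two (by linarith)) h2K
  rcases le_total ρ K with hρK | hKρ
  · exact rpow_div_le_cpProfile_of_le hp hs hK1 hρK
  · have hKp : K ≤ K ^ p := self_le_rpow_of_one_le hK1 (by linarith)
    calc ρ ^ p / K ^ p ≤ ρ ^ p / 2 ^ (p + 1) :=
          div_le_div_of_nonneg_left (rpow_nonneg ((abs_nonneg s).trans hs) p)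
            (by positivity) (h2K.trans hKp)
      _ ≤ cpProfile p s ρ := rpow_div_le_cpProfile_of_ge hp hs hKρ

end cpProfile

section c1

variable {p : ℝ}

lemma c1_quotient_eq {s t ρ : ℝ} (hρ : 0 ≤ ρ) (h : t ^ 2 + s ^ 2 = ρ ^ 2) :
    ((t ^ 2 + s ^ 2 + 2 * s + 1) ^ (p / 2) - 1 - p * s) / (t ^ 2 + s ^ 2) ^ (p / 2) =
      cpProfile p s ρ / ρ ^ p := by
  rw [h, sq_rpow_half hρ, cpProfile]

lemma c1_eq_sInf (p : ℝ) :
    c1 p = sInf {r | ∃ s ρ : ℝ, 0 < ρ ∧ |s| ≤ ρ ∧ r = cpProfile p s ρ / ρ ^ p} := by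
  rw [c1]
  congr 1
  ext r
  constructor
  · rintro ⟨s, t, hst, rfl⟩
    have hq : 0 < t ^ 2 + s ^ 2 := by
      by_contra! h
      exact hst ⟨by nlinarith [sq_nonneg t], by nlinarith [sq_nonneg s]⟩
    refine ⟨s, √(t ^ 2 + s ^ 2), sqrt_pos.2 hq, abs_le_sqrt (by nlinarith), ?_⟩
    exact c1_quotient_eq (sqrt_nonneg _) (sq_sqrt hq.le).symm
  · rintro ⟨s, ρ, hρ, hs, rfl⟩
    have hsρ : s ^ 2 ≤ ρ ^ 2 := sq_le_sq' (neg_le_of_abs_le hs) (le_of_abs_le hs)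
    have h : √(ρ ^ 2 - s ^ 2) ^ 2 + s ^ 2 = ρ ^ 2 := by
      rw [sq_sqrt (by linarith)]
      ring
    refine ⟨s, √(ρ ^ 2 - s ^ 2), fun ⟨hs0, ht0⟩ => ?_, (c1_quotient_eq hρ.le h).symm⟩
    rw [ht0, hs0] at h
    nlinarith

lemma one_div_le_cpProfile_div (hp : 2 ≤ p) {s ρ : ℝ} (hρ : 0 < ρ) (hs : |s| ≤ ρ) :
    1 / ((p + 1) * 2 ^ (p + 1)) ^ p ≤ cpProfile p s ρ / ρ ^ p := by
  rw [le_div_iff₀ (rpow_pos_of_pos hρ p), one_div_mul_eq_div]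
  exact rpow_div_le_cpProfile hp hs

lemma bddBelow_c1_set (hp : 2 ≤ p) :
    BddBelow {r | ∃ s ρ : ℝ, 0 < ρ ∧ |s| ≤ ρ ∧ r = cpProfile p s ρ / ρ ^ p} := by
  refine ⟨1 / ((p + 1) * 2 ^ (p + 1)) ^ p, ?_⟩
  rintro r ⟨s, ρ, hρ, hs, rfl⟩
  exact one_div_le_cpProfile_div hp hρ hs

lemma c1_le_cpProfile_div (hp : 2 ≤ p) {s ρ : ℝ} (hρ : 0 < ρ) (hs : |s| ≤ ρ) :
    c1 p ≤ cpProfile p s ρ / ρ ^ p := by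
  rw [c1_eq_sInf]
  exact csInf_le (bddBelow_c1_set hp) ⟨s, ρ, hρ, hs, rfl⟩

lemma c1_mul_rpow_le_cpProfile (hp : 2 ≤ p) {s ρ : ℝ} (hs : |s| ≤ ρ) :
    c1 p * ρ ^ p ≤ cpProfile p s ρ := by
  rcases ((abs_nonneg s).trans hs).eq_or_lt with rfl | hρ
  · rw [zero_rpow (by linarith), mul_zero]
    simpa using mul_sq_le_cpProfile hp hs
  · exact (le_div_iff₀ (rpow_pos_of_pos hρ p)).1 (c1_le_cpProfile_div hp hρ hs)

lemma c1_pos (hp : 2 ≤ p) : 0 < c1 p := by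
  have hK : 0 < (p + 1) * 2 ^ (p + 1) := by positivity
  refine (one_div_pos.2 (rpow_pos_of_pos hK p)).trans_le ?_
  rw [c1_eq_sInf]
  refine le_csInf ⟨_, 0, 1, one_pos, by simp, rfl⟩ ?_
  rintro r ⟨s, ρ, hρ, hs, rfl⟩
  exact one_div_le_cpProfile_div hp hρ hs

-- `(s, ρ) = (-2, 2)` makes `ρ ^ 2 + 2 s + 1 = 1`.
lemma c1_le_one (hp : 2 ≤ p) : c1 p ≤ 1 := by
  have h := c1_le_cpProfile_div hp two_pos (s := -2) (by norm_num)
  rw [cpProfile, show (2 : ℝ) ^ 2 + 2 * -2 + 1 = 1 by norm_num, one_rpow] at h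
  refine h.trans ((div_le_one (by positivity)).2 ?_)
  linarith [two_mul_le_two_rpow hp]

end c1

section InnerProductSpace

open RCLike

variable {𝕜 E : Type*} [RCLike 𝕜] [NormedAddCommGroup E] [InnerProductSpace 𝕜 E] {p : ℝ}

lemma abs_re_inner_div_le (a η : E) :
    |re (inner 𝕜 a η) / ‖a‖ ^ 2| ≤ ‖η‖ / ‖a‖ := by
  rcases eq_or_ne a 0 with rfl | ha
  · simp
  have hA : 0 < ‖a‖ := norm_pos_iff.2 ha
  rw [abs_div, abs_sq, div_le_div_iff₀ (by positivity) hA]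
  calc |re (inner 𝕜 a η)| * ‖a‖ ≤ ‖a‖ * ‖η‖ * ‖a‖ := by
        gcongr; exact (abs_re_le_norm _).trans (norm_inner_le_norm a η)
    _ = ‖η‖ * ‖a‖ ^ 2 := by ring

lemma norm_add_rpow_sub_eq_mul_cpProfile {a : E} (ha : a ≠ 0) (η : E) :
    ‖a + η‖ ^ p - ‖a‖ ^ p - p * ‖a‖ ^ (p - 2) * re (inner 𝕜 a η) =
      ‖a‖ ^ p * cpProfile p (re (inner 𝕜 a η) / ‖a‖ ^ 2) (‖η‖ / ‖a‖) := by
  have hA : 0 < ‖a‖ := norm_pos_iff.2 ha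
  have hsq : (‖a + η‖ / ‖a‖) ^ 2 =
      (‖η‖ / ‖a‖) ^ 2 + 2 * (re (inner 𝕜 a η) / ‖a‖ ^ 2) + 1 := by
    rw [div_pow, norm_add_sq (𝕜 := 𝕜)]
    field_simp
    ring
  have hnorm : ‖a + η‖ ^ p = ‖a‖ ^ p * (‖a + η‖ / ‖a‖) ^ p := by
    rw [div_rpow (norm_nonneg _) hA.le]
    field_simp [(rpow_pos_of_pos hA p).ne']
  rw [cpProfile, ← hsq, sq_rpow_half (by positivity), hnorm, rpow_sub hA, rpow_two]
  field_simp

theorem c1_mul_norm_rpow_le (hp : 2 ≤ p) (a η : E) :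
    c1 p * ‖η‖ ^ p ≤ ‖a + η‖ ^ p - ‖a‖ ^ p - p * ‖a‖ ^ (p - 2) * re (inner 𝕜 a η) := by
  rcases eq_or_ne a 0 with rfl | ha
  · simpa [zero_rpow (by linarith : p ≠ 0)] using
      mul_le_of_le_one_left (rpow_nonneg (norm_nonneg η) p) (c1_le_one hp)
  have hA : 0 < ‖a‖ := norm_pos_iff.2 ha
  rw [norm_add_rpow_sub_eq_mul_cpProfile ha, ← mul_div_cancel₀ ‖η‖ hA.ne',
    mul_rpow hA.le (by positivity), mul_left_comm, mul_div_cancel_left₀ _ hA.ne']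
  exact mul_le_mul_of_nonneg_left (c1_mul_rpow_le_cpProfile hp (abs_re_inner_div_le a η))
    (rpow_nonneg hA.le p)

end InnerProductSpace

/-- Lower bound for the `C_p` functional for `p ≥ 2`: `C_p(ξ,η) ≥ c₁(p)|η|^p` for all
`ξ, η ∈ ℂⁿ`, and `c₁(p) ∈ (0,1]`. -/
theorem Cp_lower_bound (p : ℝ) (hp : 2 ≤ p) :
    (∀ (n : ℕ) (ξ η : EuclideanSpace ℂ (Fin n)), Cp n p ξ η ≥ c1 p * ‖η‖ ^ p)
      ∧ 0 < c1 p ∧ c1 p ≤ 1 := by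
  refine ⟨fun n ξ η => ?_, c1_pos hp, c1_le_one hp⟩
  have h := c1_mul_norm_rpow_le (𝕜 := ℂ) hp (ξ - η) η
  rwa [sub_add_cancel] at h
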